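/- Let q₀,...,q_J : ℝ^{J+1} → ℝ be continuously differentiable functions with ∑_{j=0}^{J} q_j(a) = 1 for all a, satisfying Slutsky symmetry ∂q_k/∂a_l = ∂q_l/∂a_k for all k ≠ l. Then each q_l is translation invariant: q_l(a₀ + t, a₁ + t, ..., a_J + t) = q_l(a₀,...,a_J) for all t ∈ ℝ. Equivalently, writing a_j = y - p_j, the choice probabilities do not depend on income y given the prices p₁,...,p_J. -/

import Mathlib

/-!
Summing the Slutsky symmetry over `k` turns the derivative of `q l` in the direction
`𝟙 = ∑ₖ eₖ` into `∑ₖ ∂q_k/∂a_l`, the `l`-th partial derivative of `∑ₖ q_k ≡ 1`, which vanishes.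
So each `q_l` is constant along every line `t ↦ a + t • 𝟙`.
-/

theorem apply_add_smul_eq_of_fderiv_apply_eq_zero {𝕜 E F : Type*} [RCLike 𝕜]
    [NormedAddCommGroup E] [NormedSpace 𝕜 E] [NormedAddCommGroup F] [NormedSpace 𝕜 F]
    {f : E → F} (hf : Differentiable 𝕜 f) {v : E} (hv : ∀ x, fderiv 𝕜 f x v = 0)
    (x : E) (t : 𝕜) : f (x + t • v) = f x := by
  have hline : ∀ s : 𝕜, HasDerivAt (fun s : 𝕜 => f (x + s • v)) 0 s := fun s => by
    have hpath : HasDerivAt (fun s : 𝕜 => x + s • v) v s := by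
      simpa using ((hasDerivAt_id s).smul_const v).const_add x
    simpa [hv, Function.comp_def] using (hf _).hasFDerivAt.comp_hasDerivAt s hpath
  simpa using is_const_of_deriv_eq_zero (fun s => (hline s).differentiableAt)
    (fun s => (hline s).deriv) t 0

theorem sum_fderiv_eq_zero_of_sum_eq_const {𝕜 E F ι : Type*} [NontriviallyNormedField 𝕜]
    [NormedAddCommGroup E] [NormedSpace 𝕜 E] [NormedAddCommGroup F] [NormedSpace 𝕜 F]
    [Fintype ι] {q : ι → E → F} {x : E} (hq : ∀ k, DifferentiableAt 𝕜 (q k) x) {c : F}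
    (hsum : ∀ a, ∑ k, q k a = c) : ∑ k, fderiv 𝕜 (q k) x = 0 := by
  rw [← fderiv_fun_sum fun k _ => hq k, funext hsum, fderiv_fun_const, Pi.zero_apply]

theorem fderiv_apply_one_eq_zero_of_symm {ι : Type*} [Fintype ι] [DecidableEq ι]
    {q : ι → (ι → ℝ) → ℝ} {x : ι → ℝ} (hq : ∀ k, DifferentiableAt ℝ (q k) x) {c : ℝ}
    (hsum : ∀ a, ∑ k, q k a = c)
    (hsymm : ∀ k l, k ≠ l → fderiv ℝ (q k) x (Pi.single l 1) = fderiv ℝ (q l) x (Pi.single k 1))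
    (l : ι) : fderiv ℝ (q l) x 1 = 0 := by
  have hswap : ∀ k, fderiv ℝ (q l) x (Pi.single k 1) = fderiv ℝ (q k) x (Pi.single l 1) := by
    intro k
    rcases eq_or_ne k l with rfl | hkl
    · rfl
    · exact (hsymm k l hkl).symm
  calc fderiv ℝ (q l) x 1
      = ∑ k, fderiv ℝ (q l) x (Pi.single k 1) := by
        rw [← map_sum, ← Finset.univ_sum_single (1 : ι → ℝ)]
        rfl
    _ = (∑ k, fderiv ℝ (q k) x) (Pi.single l 1) := by
        simp only [hswap, FunLike.coe_sum, Finset.sum_apply]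
    _ = 0 := by
        rw [sum_fderiv_eq_zero_of_sum_eq_const hq hsum]
        rfl

/-- Daly–Zachary Slutsky symmetry implies absence of income effects: if C¹ choice
probabilities sum to 1 and satisfy `∂q_k/∂a_l = ∂q_l/∂a_k` for `k ≠ l`, then each `q_l`
is invariant under simultaneous translation `a ↦ a + t·𝟙` (i.e. does not depend on income). -/
theorem stmt4 (J : ℕ) (q : Fin (J + 1) → (Fin (J + 1) → ℝ) → ℝ)
    (hq : ∀ j, ContDiff ℝ 1 (q j))
    (hsum : ∀ a, ∑ j : Fin (J + 1), q j a = 1)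
    (hslutsky : ∀ k l, k ≠ l → ∀ a,
      fderiv ℝ (q k) a (Pi.single l 1) = fderiv ℝ (q l) a (Pi.single k 1)) :
    ∀ (l : Fin (J + 1)) (a : Fin (J + 1) → ℝ) (t : ℝ),
      q l (fun i => a i + t) = q l a := by
  intro l a t
  have hdiff : ∀ j, Differentiable ℝ (q j) := fun j => (hq j).differentiable one_ne_zero
  have hincome : ∀ x, fderiv ℝ (q l) x 1 = 0 := fun x =>
    fderiv_apply_one_eq_zero_of_symm (fun k => hdiff k x) hsum
      (fun k l hkl => hslutsky k l hkl x) l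
  have hshift : (fun i => a i + t) = a + t • 1 := by
    funext i
    simp
  rw [hshift, apply_add_smul_eq_of_fderiv_apply_eq_zero (hdiff l) hincome]
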